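/- For all γ ∈ [0,1], t > 0 and real numbers x, y, z, the heat-kernel bound p_t(z - y + γ(y - x)) ≤ p_t(z-y) + p_t(z-x) + (2πt)^{-1/2} · 𝟙_{|y-x| > |z-y|} holds. -/

import Mathlib

/-!
If `|y - x| ≤ |z - y|`, then `z - y` and `z - x` have the same sign, so their convex combination
`z - y + γ (y - x)` is at least `min (|z - y|, |z - x|)` in absolute value and the radial decrease of
`p_t` gives the bound; otherwise `p_t ≤ (2πt)^{-1/2}` suffices.
-/

open Real

noncomputable def heatK (t x : ℝ) : ℝ := (Real.sqrt (2 * π * t))⁻¹ * Real.exp (-x ^ 2 / (2 * t))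

lemma heatK_nonneg (t x : ℝ) : 0 ≤ heatK t x := by
  unfold heatK
  positivity

lemma heatK_le_inv_sqrt {t : ℝ} (ht : 0 ≤ t) (x : ℝ) : heatK t x ≤ (Real.sqrt (2 * π * t))⁻¹ := by
  have hexp : Real.exp (-x ^ 2 / (2 * t)) ≤ 1 :=
    Real.exp_le_one_iff.mpr (div_nonpos_of_nonpos_of_nonneg (by nlinarith [sq_nonneg x]) (by linarith))
  unfold heatK
  exact mul_le_of_le_one_right (by positivity) hexp

lemma heatK_le_heatK_of_sq_le {t u v : ℝ} (ht : 0 ≤ t) (h : u ^ 2 ≤ v ^ 2) :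
    heatK t v ≤ heatK t u := by
  unfold heatK
  gcongr

lemma heatK_le_add_of_min_sq_le {t a b w : ℝ} (ht : 0 ≤ t) (h : min (a ^ 2) (b ^ 2) ≤ w ^ 2) :
    heatK t w ≤ heatK t a + heatK t b := by
  rcases min_le_iff.mp h with ha | hb
  · linarith [heatK_le_heatK_of_sq_le ht ha, heatK_nonneg t b]
  · linarith [heatK_le_heatK_of_sq_le ht hb, heatK_nonneg t a]

lemma mul_nonneg_of_abs_sub_le {a b : ℝ} (h : |b - a| ≤ |a|) : 0 ≤ a * b := by
  have hsq : (b - a) ^ 2 ≤ a ^ 2 := sq_le_sq.mpr h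
  nlinarith [sq_nonneg b]

lemma min_sq_le_sq_add_mul_sub {a b γ : ℝ} (hab : 0 ≤ a * b) (hγ₀ : 0 ≤ γ) (hγ₁ : γ ≤ 1) :
    min (a ^ 2) (b ^ 2) ≤ (a + γ * (b - a)) ^ 2 := by
  rcases le_total (a ^ 2) (b ^ 2) with hle | hle
  · rw [min_eq_left hle]
    have hab' : a ^ 2 ≤ a * b := by nlinarith [mul_nonneg (sq_nonneg a) (sub_nonneg.mpr hle)]
    nlinarith [sq_nonneg (γ * (b - a)), mul_nonneg hγ₀ (sub_nonneg.mpr hab')]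
  · rw [min_eq_right hle]
    have hab' : b ^ 2 ≤ a * b := by nlinarith [mul_nonneg (sq_nonneg b) (sub_nonneg.mpr hle)]
    nlinarith [sq_nonneg ((1 - γ) * (a - b)), mul_nonneg (sub_nonneg.mpr hγ₁) (sub_nonneg.mpr hab')]

theorem stmt_15 (γ t x y z : ℝ) (hγ₀ : 0 ≤ γ) (hγ₁ : γ ≤ 1) (ht : 0 < t) :
    heatK t (z - y + γ * (y - x)) ≤
      heatK t (z - y) + heatK t (z - x) +
        (Real.sqrt (2 * π * t))⁻¹ * (if |z - y| < |y - x| then (1 : ℝ) else 0) := by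
  split_ifs with hfar
  · linarith [heatK_le_inv_sqrt ht.le (z - y + γ * (y - x)), heatK_nonneg t (z - y),
      heatK_nonneg t (z - x)]
  · have hsame : 0 ≤ (z - y) * (z - x) := by
      apply mul_nonneg_of_abs_sub_le
      rwa [sub_sub_sub_cancel_left, ← not_lt]
    have hbetween := min_sq_le_sq_add_mul_sub hsame hγ₀ hγ₁
    rw [sub_sub_sub_cancel_left] at hbetween
    rw [mul_zero, add_zero]
    exact heatK_le_add_of_min_sq_le ht.le hbetween
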